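/- Let ℓ be a prime and suppose r₁, s₁, r₂, s₂ are (nonzero) powers of ℓ. Then |Ŝ_{r₁,s₁,r₂,s₂}(0, 0, 0, 0; D₁, D₂)| ≤ gcd(D₁, D₂) · (largest power of ℓ dividing lcm(D₁,D₂)) · r₂. -/

import Mathlib

open scoped BigOperators

/-- e(x) = exp(2πix). -/
noncomputable def e (x : ℝ) : ℂ := Complex.exp (2 * Real.pi * Complex.I * x)

/-- A choice of a pair `(Y, Z)` with `Y·b + Z·c ≡ 1 (mod D)`, when one exists. -/
noncomputable def YZ (D : ℕ) (b c : ℤ) : ℤ × ℤ :=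
  letI := Classical.propDecidable (∃ p : ℤ × ℤ, p.1 * b + p.2 * c ≡ 1 [ZMOD (D : ℤ)])
  if h : ∃ p : ℤ × ℤ, p.1 * b + p.2 * c ≡ 1 [ZMOD (D : ℤ)] then h.choose else (0, 0)

/-- The long Weyl element GL(3) Kloosterman sum
`S(n₁,m₂,m₁,n₂;D₁,D₂) = ∑ e((n₁B₁ + m₁(Y₁D₂ − Z₁B₂))/D₁ + (m₂B₂ + n₂(Y₂D₁ − Z₂B₁))/D₂)`,
where the sum runs over `B₁,C₁ mod D₁` and `B₂,C₂ mod D₂` with `gcd(B_j,C_j,D_j)=1` and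
`D₁C₂ + B₁B₂ + D₂C₁ ≡ 0 mod D₁D₂`, and `Y_jB_j + Z_jC_j ≡ 1 mod D_j`. -/
noncomputable def SKl (n₁ m₂ m₁ n₂ : ℤ) (D₁ D₂ : ℕ) : ℂ :=
  ∑ b₁ ∈ Finset.range D₁, ∑ c₁ ∈ Finset.range D₁,
    ∑ b₂ ∈ Finset.range D₂, ∑ c₂ ∈ Finset.range D₂,
      if Nat.gcd (Nat.gcd b₁ c₁) D₁ = 1 ∧ Nat.gcd (Nat.gcd b₂ c₂) D₂ = 1 ∧
          (D₁ : ℤ) * c₂ + (b₁ : ℤ) * b₂ + (D₂ : ℤ) * c₁ ≡ 0 [ZMOD ((D₁ : ℤ) * D₂)] then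
        e ((((n₁ * b₁ + m₁ * ((YZ D₁ (b₁ : ℤ) (c₁ : ℤ)).1 * D₂
                - (YZ D₁ (b₁ : ℤ) (c₁ : ℤ)).2 * b₂) : ℤ)) : ℝ) / (D₁ : ℝ)
          + (((m₂ * b₂ + n₂ * ((YZ D₂ (b₂ : ℤ) (c₂ : ℤ)).1 * D₁
                - (YZ D₂ (b₂ : ℤ) (c₂ : ℤ)).2 * b₁) : ℤ)) : ℝ) / (D₂ : ℝ))
      else 0

/-- The normalized Fourier transform of the long Weyl element Kloosterman sum:
`Ŝ_{r₁,s₁,r₂,s₂}(x₁,y₁,x₂,y₂;D₁,D₂) = (1/(D₁²D₂²)) ∑_{n₁,m₁ mod D₁} ∑_{n₂,m₂ mod D₂}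
  S(n₁r₁, m₂r₂, m₁s₁, n₂s₂; D₁,D₂) e(−(x₁m₁+y₁n₁)/D₁ − (x₂m₂+y₂n₂)/D₂)`. -/
noncomputable def Shat (r₁ s₁ r₂ s₂ x₁ y₁ x₂ y₂ : ℤ) (D₁ D₂ : ℕ) : ℂ :=
  (1 / ((D₁ : ℂ) ^ 2 * (D₂ : ℂ) ^ 2)) *
    ∑ n₁ ∈ Finset.range D₁, ∑ m₁ ∈ Finset.range D₁,
      ∑ n₂ ∈ Finset.range D₂, ∑ m₂ ∈ Finset.range D₂,
        SKl ((n₁ : ℤ) * r₁) ((m₂ : ℤ) * r₂) ((m₁ : ℤ) * s₁) ((n₂ : ℤ) * s₂) D₁ D₂ *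
          e (-(((x₁ * (m₁ : ℤ) + y₁ * (n₁ : ℤ) : ℤ) : ℝ) / (D₁ : ℝ))
            - ((x₂ * (m₂ : ℤ) + y₂ * (n₂ : ℤ) : ℤ) : ℝ) / (D₂ : ℝ))

/-! At `x = y = 0` the averages over `n₁, m₁, n₂, m₂` are complete geometric sums. Bounding the
`m₁`- and `n₂`-sums trivially, the term of `(B₁, C₁, B₂, C₂)` contributes at most `D₁²D₂²`, and only
when `D₁ ∣ r₁B₁` and `D₂ ∣ r₂B₂`. So `|Ŝ|` is at most the number of such quadruples satisfying
`D₁C₂ + B₁B₂ + D₂C₁ ≡ 0 (mod D₁D₂)`. There are `gcd(D₁, r₁) ≤ ℓ^{v_ℓ(lcm(D₁, D₂))}` choices of `B₁`,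
`gcd(D₂, r₂) ≤ r₂` of `B₂`, and then at most `gcd(D₁, D₂)` pairs `(C₁, C₂)`: the congruence
determines `C₁` modulo `D₁ / gcd(D₁, D₂)`, and `C₁` determines `C₂`. -/

open Finset

lemma sum_comm_four {M ι κ : Type*} [AddCommMonoid M] (s₁ s₂ s₃ s₄ : Finset ι)
    (t₁ t₂ t₃ t₄ : Finset κ) (f : ι → ι → ι → ι → κ → κ → κ → κ → M) :
    ∑ a₁ ∈ s₁, ∑ a₂ ∈ s₂, ∑ a₃ ∈ s₃, ∑ a₄ ∈ s₄, ∑ b₁ ∈ t₁, ∑ b₂ ∈ t₂, ∑ b₃ ∈ t₃, ∑ b₄ ∈ t₄,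
        f a₁ a₂ a₃ a₄ b₁ b₂ b₃ b₄
      = ∑ b₁ ∈ t₁, ∑ b₂ ∈ t₂, ∑ b₃ ∈ t₃, ∑ b₄ ∈ t₄, ∑ a₁ ∈ s₁, ∑ a₂ ∈ s₂, ∑ a₃ ∈ s₃, ∑ a₄ ∈ s₄,
        f a₁ a₂ a₃ a₄ b₁ b₂ b₃ b₄ := by
  calc _ = ∑ a ∈ s₁ ×ˢ s₂ ×ˢ s₃ ×ˢ s₄, ∑ b ∈ t₁ ×ˢ t₂ ×ˢ t₃ ×ˢ t₄,
        f a.1 a.2.1 a.2.2.1 a.2.2.2 b.1 b.2.1 b.2.2.1 b.2.2.2 := by simp only [sum_product]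
    _ = ∑ b ∈ t₁ ×ˢ t₂ ×ˢ t₃ ×ˢ t₄, ∑ a ∈ s₁ ×ˢ s₂ ×ˢ s₃ ×ˢ s₄,
        f a.1 a.2.1 a.2.2.1 a.2.2.2 b.1 b.2.1 b.2.2.1 b.2.2.2 := sum_comm
    _ = _ := by simp only [sum_product]

lemma card_le_of_modEq {s : Finset ℕ} {q g : ℕ} (hq : 0 < q) (hs : ∀ x ∈ s, x < q * g)
    (hmod : ∀ x ∈ s, ∀ y ∈ s, x ≡ y [MOD q]) : #s ≤ g := by
  refine (card_le_card_of_injOn (· / q) (fun x hx => ?_) fun x hx y hy hxy => ?_).trans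
    (card_range g).le
  · simpa [Nat.div_lt_iff_lt_mul hq, mul_comm] using hs x hx
  · rw [← Nat.div_add_mod x q, ← Nat.div_add_mod y q, hmod x hx y hy]
    simp_all

lemma card_filter_dvd_mul_le (D r : ℕ) (hD : 0 < D) :
    #{b ∈ range D | (D : ℤ) ∣ (r : ℤ) * (b : ℕ)} ≤ Nat.gcd D r := by
  have hg : 0 < Nat.gcd D r := Nat.gcd_pos_of_pos_left r hD
  have hzero : ∀ b ∈ {b ∈ range D | (D : ℤ) ∣ (r : ℤ) * (b : ℕ)}, b ≡ 0 [MOD D / Nat.gcd D r] := by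
    intro b hb
    rw [mem_filter] at hb
    refine Nat.ModEq.cancel_left_div_gcd hD ?_
    rw [mul_zero, Nat.modEq_zero_iff_dvd]
    exact_mod_cast hb.2
  refine card_le_of_modEq (Nat.div_pos (Nat.gcd_le_left r hD) hg) (fun b hb => ?_)
    fun b hb b' hb' => (hzero b hb).trans (hzero b' hb').symm
  rw [Nat.div_mul_cancel (Nat.gcd_dvd_left D r)]
  exact mem_range.mp (mem_filter.mp hb).1

lemma card_filter_congruence_le (D₁ D₂ : ℕ) (hD₁ : 0 < D₁) (t : ℤ) :
    #{p ∈ range D₁ ×ˢ range D₂ | (D₁ : ℤ) * p.2 + t + D₂ * p.1 ≡ 0 [ZMOD D₁ * D₂]}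
      ≤ Nat.gcd D₁ D₂ := by
  set S := {p ∈ range D₁ ×ˢ range D₂ | (D₁ : ℤ) * p.2 + t + D₂ * p.1 ≡ 0 [ZMOD D₁ * D₂]}
  have hmem : ∀ p ∈ S, p.1 < D₁ ∧ p.2 < D₂ ∧ (D₁ : ℤ) * p.2 + t + D₂ * p.1 ≡ 0 [ZMOD D₁ * D₂] := by
    intro p hp
    simpa [S, and_assoc] using hp
  have hinj : Set.InjOn Prod.fst (S : Set (ℕ × ℕ)) := by
    intro p hp p' hp' h
    obtain ⟨-, hp₂, hpc⟩ := hmem p hp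
    obtain ⟨-, hp₂', hpc'⟩ := hmem p' hp'
    have : (D₁ : ℤ) * p.2 ≡ D₁ * p'.2 [ZMOD D₁ * D₂] := by
      rw [h] at hpc
      exact Int.ModEq.add_right_cancel' _ (Int.ModEq.add_right_cancel' _ (hpc.trans hpc'.symm))
    have h₂ := Int.natCast_modEq_iff.mp (Int.ModEq.mul_left_cancel' (by positivity) this)
    exact Prod.ext h (h₂.eq_of_lt_of_lt hp₂ hp₂')
  have hfst : ∀ p ∈ S, ∀ p' ∈ S, p.1 ≡ p'.1 [MOD D₁ / Nat.gcd D₁ D₂] := by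
    intro p hp p' hp'
    have h := Int.ModEq.dvd (((hmem p hp).2.2.trans (hmem p' hp').2.2.symm).of_mul_right D₂)
    have h₁ : (D₂ : ℤ) * p.1 ≡ D₂ * p'.1 [ZMOD D₁] := by
      rw [Int.modEq_iff_dvd]
      have := dvd_sub h (dvd_mul_right (D₁ : ℤ) (p'.2 - p.2 : ℤ))
      ring_nf at this ⊢
      exact this
    exact Nat.ModEq.cancel_left_div_gcd hD₁ (Int.natCast_modEq_iff.mp h₁)
  rw [← card_image_of_injOn hinj]
  have hg : 0 < Nat.gcd D₁ D₂ := Nat.gcd_pos_of_pos_left D₂ hD₁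
  refine card_le_of_modEq (Nat.div_pos (Nat.gcd_le_left D₂ hD₁) hg) ?_ ?_
  · simp only [mem_image]
    rintro _ ⟨p, hp, rfl⟩
    rw [Nat.div_mul_cancel (Nat.gcd_dvd_left D₁ D₂)]
    exact (hmem p hp).1
  · simp only [mem_image]
    rintro _ ⟨p, hp, rfl⟩ _ ⟨p', hp', rfl⟩
    exact hfst p hp p' hp'

lemma gcd_prime_pow_dvd_ordProj {p n : ℕ} (hp : p.Prime) (hn : n ≠ 0) (k : ℕ) :
    Nat.gcd n (p ^ k) ∣ p ^ n.factorization p := by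
  obtain ⟨j, -, hj⟩ := (Nat.dvd_prime_pow hp).mp (Nat.gcd_dvd_right n (p ^ k))
  rw [hj, ← hp.pow_dvd_iff_dvd_ordProj hn, ← hj]
  exact Nat.gcd_dvd_left n _

lemma e_add (x y : ℝ) : e (x + y) = e x * e y := by
  rw [e, e, e, ← Complex.exp_add]
  push_cast
  ring_nf

lemma e_zero : e 0 = 1 := by simp [e]

lemma e_intCast (a : ℤ) : e a = 1 := by
  rw [e, ← Complex.exp_int_mul_two_pi_mul_I a]
  push_cast
  ring_nf

lemma e_natCast_mul (n : ℕ) (x : ℝ) : e (n * x) = e x ^ n := by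
  rw [e, e, ← Complex.exp_nat_mul]
  push_cast
  ring_nf

lemma e_intCast_div_eq_one_iff {D : ℕ} (hD : 0 < D) (a : ℤ) :
    e (a / D) = 1 ↔ (D : ℤ) ∣ a := by
  rw [e, Complex.exp_eq_one_iff]
  constructor
  · rintro ⟨n, hn⟩
    have hπ : 2 * (Real.pi : ℂ) * Complex.I ≠ 0 := by simp [Real.pi_ne_zero]
    have hdiv : (a : ℝ) / D = n := by
      exact_mod_cast mul_left_cancel₀ hπ (hn.trans (mul_comm _ _))
    refine ⟨n, ?_⟩
    rw [div_eq_iff (by positivity)] at hdiv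
    exact_mod_cast hdiv.trans (mul_comm _ _)
  · rintro ⟨k, rfl⟩
    refine ⟨k, ?_⟩
    rw [Int.cast_mul, Int.cast_natCast, mul_div_cancel_left₀ _ (by positivity)]
    push_cast
    ring

lemma sum_range_e_mul_div {D : ℕ} (hD : 0 < D) (a : ℤ) :
    ∑ n ∈ range D, e (((n : ℤ) * a : ℤ) / D) = if (D : ℤ) ∣ a then (D : ℂ) else 0 := by
  have hpow : ∀ n : ℕ, e (((n : ℤ) * a : ℤ) / D) = e (a / D) ^ n := fun n => by
    rw [← e_natCast_mul]
    push_cast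
    ring_nf
  simp only [hpow]
  split_ifs with h
  · simp [(e_intCast_div_eq_one_iff hD a).mpr h]
  · have hD' : e (a / D) ^ D = 1 := by
      rw [← e_natCast_mul, mul_div_cancel₀ _ (by positivity), e_intCast]
    rw [geom_sum_eq (mt (e_intCast_div_eq_one_iff hD a).mp h), hD', sub_self, zero_div]

lemma norm_sum_e_le {D₁ D₂ : ℕ} (hD₁ : 0 < D₁) (hD₂ : 0 < D₂) (a₁ x₁ a₂ x₂ : ℤ) :
    ‖∑ n₁ ∈ range D₁, ∑ m₁ ∈ range D₁, ∑ n₂ ∈ range D₂, ∑ m₂ ∈ range D₂,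
        e ((((n₁ : ℤ) * a₁ + (m₁ : ℤ) * x₁ : ℤ) : ℝ) / D₁
          + (((m₂ : ℤ) * a₂ + (n₂ : ℤ) * x₂ : ℤ) : ℝ) / D₂)‖
      ≤ if (D₁ : ℤ) ∣ a₁ ∧ (D₂ : ℤ) ∣ a₂ then (D₁ : ℝ) ^ 2 * D₂ ^ 2 else 0 := by
  have hsplit : ∀ n₁ m₁ n₂ m₂ : ℕ,
      e ((((n₁ : ℤ) * a₁ + (m₁ : ℤ) * x₁ : ℤ) : ℝ) / D₁
          + (((m₂ : ℤ) * a₂ + (n₂ : ℤ) * x₂ : ℤ) : ℝ) / D₂)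
        = e (((n₁ : ℤ) * a₁ : ℤ) / D₁) * e (((m₁ : ℤ) * x₁ : ℤ) / D₁)
          * e (((n₂ : ℤ) * x₂ : ℤ) / D₂) * e (((m₂ : ℤ) * a₂ : ℤ) / D₂) := by
    intro n₁ m₁ n₂ m₂
    rw [← e_add, ← e_add, ← e_add]
    push_cast
    ring_nf
  simp only [hsplit, ← sum_mul, ← mul_sum, sum_range_e_mul_div hD₁,
    sum_range_e_mul_div hD₂]
  split_ifs <;> simp_all [sq, mul_assoc]

def survivingCount (r₁ r₂ : ℤ) (D₁ D₂ : ℕ) : ℕ :=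
  ∑ b₁ ∈ range D₁, ∑ c₁ ∈ range D₁, ∑ b₂ ∈ range D₂, ∑ c₂ ∈ range D₂,
    if (D₁ : ℤ) ∣ r₁ * b₁ ∧ (D₂ : ℤ) ∣ r₂ * b₂ ∧
        (D₁ : ℤ) * c₂ + (b₁ : ℤ) * b₂ + (D₂ : ℤ) * c₁ ≡ 0 [ZMOD (D₁ : ℤ) * D₂]
    then 1 else 0

lemma norm_shat_zero_le (r₁ s₁ r₂ s₂ : ℤ) {D₁ D₂ : ℕ} (hD₁ : 0 < D₁) (hD₂ : 0 < D₂) :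
    ‖Shat r₁ s₁ r₂ s₂ 0 0 0 0 D₁ D₂‖ ≤ survivingCount r₁ r₂ D₁ D₂ := by
  have hC : (0 : ℝ) < (D₁ : ℝ) ^ 2 * D₂ ^ 2 := by positivity
  unfold Shat SKl survivingCount
  simp only [zero_mul, add_zero, Int.cast_zero, zero_div, neg_zero, sub_zero, e_zero, mul_one]
  rw [sum_comm_four, norm_mul, one_div, norm_inv, inv_mul_le_iff₀ (by simpa using hC)]
  simp only [norm_mul, norm_pow, Complex.norm_natCast, Nat.cast_sum, Nat.cast_ite, Nat.cast_one,
    Nat.cast_zero, mul_sum]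
  refine (norm_sum_le _ _).trans (sum_le_sum fun b₁ _ => ?_)
  refine (norm_sum_le _ _).trans (sum_le_sum fun c₁ _ => ?_)
  refine (norm_sum_le _ _).trans (sum_le_sum fun b₂ _ => ?_)
  refine (norm_sum_le _ _).trans (sum_le_sum fun c₂ _ => ?_)
  by_cases hcond : (b₁.gcd c₁).gcd D₁ = 1 ∧ (b₂.gcd c₂).gcd D₂ = 1 ∧
      (D₁ : ℤ) * c₂ + (b₁ : ℤ) * b₂ + (D₂ : ℤ) * c₁ ≡ 0 [ZMOD (D₁ : ℤ) * D₂]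
  · simp only [if_pos hcond, mul_assoc]
    refine (norm_sum_e_le hD₁ hD₂ _ _ _ _).trans ?_
    by_cases hdiv : (D₁ : ℤ) ∣ r₁ * b₁ ∧ (D₂ : ℤ) ∣ r₂ * b₂ <;> simp [hdiv, hcond.2.2]
  · simp only [if_neg hcond, sum_const_zero, norm_zero]
    positivity

lemma survivingCount_le (r₁ r₂ : ℕ) {D₁ D₂ : ℕ} (hD₁ : 0 < D₁) (hD₂ : 0 < D₂) :
    survivingCount r₁ r₂ D₁ D₂ ≤ Nat.gcd D₁ r₁ * Nat.gcd D₂ r₂ * Nat.gcd D₁ D₂ := by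
  have hpair : ∀ b₁ b₂ : ℕ, (∑ c₁ ∈ range D₁, ∑ c₂ ∈ range D₂,
      if (D₁ : ℤ) * c₂ + (b₁ : ℤ) * b₂ + (D₂ : ℤ) * c₁ ≡ 0 [ZMOD (D₁ : ℤ) * D₂] then 1 else 0)
        ≤ Nat.gcd D₁ D₂ := fun b₁ b₂ => by
    rw [← sum_product', sum_boole]
    exact card_filter_congruence_le D₁ D₂ hD₁ ((b₁ : ℤ) * b₂)
  calc survivingCount r₁ r₂ D₁ D₂
      = ∑ b₁ ∈ range D₁ with (D₁ : ℤ) ∣ (r₁ : ℤ) * (b₁ : ℕ),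
          ∑ b₂ ∈ range D₂ with (D₂ : ℤ) ∣ (r₂ : ℤ) * (b₂ : ℕ),
            ∑ c₁ ∈ range D₁, ∑ c₂ ∈ range D₂,
              if (D₁ : ℤ) * c₂ + (b₁ : ℤ) * b₂ + (D₂ : ℤ) * c₁ ≡ 0 [ZMOD (D₁ : ℤ) * D₂]
              then 1 else 0 := by
        simp only [survivingCount, ite_and, sum_ite_irrel, sum_const_zero, ← sum_filter]
        exact sum_congr rfl fun _ _ => sum_comm
    _ ≤ ∑ b₁ ∈ range D₁ with (D₁ : ℤ) ∣ (r₁ : ℤ) * (b₁ : ℕ),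
          ∑ b₂ ∈ range D₂ with (D₂ : ℤ) ∣ (r₂ : ℤ) * (b₂ : ℕ), Nat.gcd D₁ D₂ := by
        gcongr with b₁ _ b₂ _
        exact hpair b₁ b₂
    _ ≤ Nat.gcd D₁ r₁ * Nat.gcd D₂ r₂ * Nat.gcd D₁ D₂ := by
        simp only [sum_const, smul_eq_mul, ← mul_assoc]
        gcongr
        · exact card_filter_dvd_mul_le D₁ r₁ hD₁
        · exact card_filter_dvd_mul_le D₂ r₂ hD₂

theorem shat_prime_power_bound_general (ℓ : ℕ) (hℓ : ℓ.Prime) (r₁ s₁ r₂ s₂ : ℕ)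
    (hr₁ : ∃ k : ℕ, r₁ = ℓ ^ k)
    (hr₂ : ∃ k : ℕ, r₂ = ℓ ^ k)
    (D₁ D₂ : ℕ) (hD₁ : 0 < D₁) (hD₂ : 0 < D₂) :
    ‖Shat (r₁ : ℤ) (s₁ : ℤ) (r₂ : ℤ) (s₂ : ℤ) 0 0 0 0 D₁ D₂‖
      ≤ (Nat.gcd D₁ D₂ : ℝ) * ((ℓ ^ ((Nat.lcm D₁ D₂).factorization ℓ) : ℕ) : ℝ) * (r₂ : ℝ) := by
  obtain ⟨k₁, rfl⟩ := hr₁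
  obtain ⟨k₂, rfl⟩ := hr₂
  have hgcd₁ : Nat.gcd D₁ (ℓ ^ k₁) ≤ ℓ ^ (Nat.lcm D₁ D₂).factorization ℓ :=
    Nat.le_of_dvd (pow_pos hℓ.pos _) <|
      (Nat.gcd_dvd_gcd_of_dvd_left _ (Nat.dvd_lcm_left D₁ D₂)).trans
        (gcd_prime_pow_dvd_ordProj hℓ (Nat.lcm_ne_zero hD₁.ne' hD₂.ne') k₁)
  have hgcd₂ : Nat.gcd D₂ (ℓ ^ k₂) ≤ ℓ ^ k₂ := Nat.gcd_le_right _ (pow_pos hℓ.pos _)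
  have hcount := (survivingCount_le _ _ hD₁ hD₂).trans
    (Nat.mul_le_mul_right (Nat.gcd D₁ D₂) (Nat.mul_le_mul hgcd₁ hgcd₂))
  calc _ ≤ (survivingCount (ℓ ^ k₁ : ℕ) (ℓ ^ k₂ : ℕ) D₁ D₂ : ℝ) := norm_shat_zero_le _ _ _ _ hD₁ hD₂
    _ ≤ ((ℓ ^ (Nat.lcm D₁ D₂).factorization ℓ * ℓ ^ k₂ * Nat.gcd D₁ D₂ : ℕ) : ℝ) := by
        exact_mod_cast hcount
    _ = _ := by push_cast; ring

theorem shat_prime_power_bound (ℓ : ℕ) (hℓ : ℓ.Prime) (r₁ s₁ r₂ s₂ : ℕ)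
    (hr₁ : ∃ k : ℕ, r₁ = ℓ ^ k) (hs₁ : ∃ k : ℕ, s₁ = ℓ ^ k)
    (hr₂ : ∃ k : ℕ, r₂ = ℓ ^ k) (hs₂ : ∃ k : ℕ, s₂ = ℓ ^ k)
    (D₁ D₂ : ℕ) (hD₁ : 0 < D₁) (hD₂ : 0 < D₂) :
    ‖Shat (r₁ : ℤ) (s₁ : ℤ) (r₂ : ℤ) (s₂ : ℤ) 0 0 0 0 D₁ D₂‖
      ≤ (Nat.gcd D₁ D₂ : ℝ) * ((ℓ ^ ((Nat.lcm D₁ D₂).factorization ℓ) : ℕ) : ℝ) * (r₂ : ℝ) :=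
  shat_prime_power_bound_general ℓ hℓ r₁ s₁ r₂ s₂ hr₁ hr₂ D₁ D₂ hD₁ hD₂
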